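/- arXiv:1402.5284 — 6 statements merged into one kernel-verified Lean document; each statement's English description precedes it below -/
import Mathlib

section
/- Let T ⊆ ℝ^N be a closed cone, y ∈ ℝ^N, and define g = sup{ yᵀξ : ξ ∈ T, ‖ξ‖ ≤ 1 }. If z ∈ T is a best approximation of y in T, then g = ‖z‖ = sqrt(‖y‖² − dist(y,T)²). -/
open scoped RealInnerProductSpace

lemma aux_quad1 (A p n : ℝ) (hn : 0 < n)
    (h : A - 2 * p + n ≤ A - 2 * (p / n) * p + (p / n) ^ 2 * n) : p = n := by
  have e : A - 2 * (p / n) * p + (p / n) ^ 2 * n = A - p ^ 2 / n := by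
    field_simp; ring
  rw [e] at h
  have h2 : p ^ 2 / n ≤ 2 * p - n := by linarith
  rw [div_le_iff₀ hn] at h2
  have h3 : (p - n) ^ 2 = 0 := le_antisymm (by nlinarith) (sq_nonneg _)
  have := (pow_eq_zero_iff two_ne_zero).mp h3
  linarith [sub_eq_zero.mp this]

lemma aux_quad2 (A q n m : ℝ) (hm : 0 < m)
    (h : A - 2 * n + n ≤ A - 2 * (q / m) * q + (q / m) ^ 2 * m) : q ^ 2 ≤ n * m := by
  have e : A - 2 * (q / m) * q + (q / m) ^ 2 * m = A - q ^ 2 / m := by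
    field_simp; ring
  rw [e] at h
  have h2 : q ^ 2 / m ≤ n := by linarith
  rw [div_le_iff₀ hm] at h2
  exact h2

/-- For a closed cone `T`, `y ∈ ℝ^N` and a best approximation `z ∈ T` of `y`,
the quantity `g = sup { yᵀξ : ξ ∈ T, ‖ξ‖ ≤ 1 }` satisfies
`g = ‖z‖ = sqrt(‖y‖² − dist(y,T)²)`. -/
theorem stmt_1 {N : ℕ} (T : Set (EuclideanSpace ℝ (Fin N)))
    (hclosed : IsClosed T) (hne : T.Nonempty)
    (hcone : ∀ ξ ∈ T, ∀ α : ℝ, 0 ≤ α → α • ξ ∈ T)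
    (y z : EuclideanSpace ℝ (Fin N)) (hzT : z ∈ T)
    (hbest : ‖y - z‖ = Metric.infDist y T)
    (g : ℝ) (hg : g = sSup ((fun ξ => ⟪y, ξ⟫) '' {ξ | ξ ∈ T ∧ ‖ξ‖ ≤ 1})) :
    g = ‖z‖ ∧ ‖z‖ = Real.sqrt (‖y‖ ^ 2 - Metric.infDist y T ^ 2) := by
  have h0T : (0 : EuclideanSpace ℝ (Fin N)) ∈ T := by
    obtain ⟨ξ, hξ⟩ := hne
    simpa using hcone ξ hξ 0 le_rfl
  have hle : ∀ ξ ∈ T, ‖y - z‖ ≤ ‖y - ξ‖ := by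
    intro ξ hξ
    rw [hbest, ← dist_eq_norm]
    exact Metric.infDist_le_dist_of_mem hξ
  -- key quadratic inequality
  have key : ∀ ξ ∈ T, ∀ α : ℝ, 0 ≤ α →
      ‖y‖ ^ 2 - 2 * ⟪y, z⟫ + ‖z‖ ^ 2 ≤ ‖y‖ ^ 2 - 2 * α * ⟪y, ξ⟫ + α ^ 2 * ‖ξ‖ ^ 2 := by
    intro ξ hξ α hα
    have h1 := hle (α • ξ) (hcone ξ hξ α hα)
    have h2 : ‖y - z‖ ^ 2 ≤ ‖y - α • ξ‖ ^ 2 :=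
      pow_le_pow_left₀ (norm_nonneg _) h1 2
    have e1 : ‖y - z‖ ^ 2 = ‖y‖ ^ 2 - 2 * ⟪y, z⟫ + ‖z‖ ^ 2 := by
      rw [norm_sub_sq_real]
    have e2 : ‖y - α • ξ‖ ^ 2 = ‖y‖ ^ 2 - 2 * α * ⟪y, ξ⟫ + α ^ 2 * ‖ξ‖ ^ 2 := by
      rw [norm_sub_sq_real, real_inner_smul_right, norm_smul, Real.norm_eq_abs,
        abs_of_nonneg hα, mul_pow]; ring
    rw [e1, e2] at h2
    exact h2
  have hp0 : ‖z‖ ^ 2 ≤ 2 * ⟪y, z⟫ := by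
    nlinarith [key 0 h0T 0 le_rfl, norm_nonneg (0 : EuclideanSpace ℝ (Fin N))]
  have hpz : ⟪y, z⟫ = ‖z‖ ^ 2 := by
    by_cases hz : z = 0
    · simp [hz]
    · have hz2 : (0:ℝ) < ‖z‖ ^ 2 := pow_pos (norm_pos_iff.mpr hz) 2
      have hα : (0:ℝ) ≤ ⟪y, z⟫ / ‖z‖ ^ 2 := div_nonneg (by linarith) hz2.le
      exact aux_quad1 (‖y‖ ^ 2) _ _ hz2 (key z hzT _ hα)
  -- upper bound
  have hub : ∀ ξ ∈ T, ‖ξ‖ ≤ 1 → ⟪y, ξ⟫ ≤ ‖z‖ := by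
    intro ξ hξ hξ1
    by_cases hq : ⟪y, ξ⟫ ≤ 0
    · exact hq.trans (norm_nonneg z)
    · push_neg at hq
      have hξ0 : ξ ≠ 0 := by
        intro h; rw [h] at hq; simp at hq
      have hn2 : (0:ℝ) < ‖ξ‖ ^ 2 := pow_pos (norm_pos_iff.mpr hξ0) 2
      have hα : (0:ℝ) ≤ ⟪y, ξ⟫ / ‖ξ‖ ^ 2 := div_nonneg hq.le hn2.le
      have h := key ξ hξ (⟪y, ξ⟫ / ‖ξ‖ ^ 2) hα
      rw [hpz] at h
      have h2 : ⟪y, ξ⟫ ^ 2 ≤ ‖z‖ ^ 2 * ‖ξ‖ ^ 2 :=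
        aux_quad2 (‖y‖ ^ 2) _ _ _ hn2 h
      have h3 : ⟪y, ξ⟫ ^ 2 ≤ ‖z‖ ^ 2 := by nlinarith [mul_le_mul hξ1 hξ1 (norm_nonneg ξ) zero_le_one, sq_nonneg ‖z‖]
      have hpos : (0:ℝ) < ⟪y, ξ⟫ + ‖z‖ := by linarith [norm_nonneg z]
      nlinarith [h3, hpos]
  -- membership
  have hmem : ‖z‖ ∈ ((fun ξ => ⟪y, ξ⟫) '' {ξ | ξ ∈ T ∧ ‖ξ‖ ≤ 1}) := by
    by_cases hz : z = 0
    · refine ⟨0, ⟨h0T, by simp⟩, by simp [hz]⟩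
    · have hz' : (0:ℝ) < ‖z‖ := norm_pos_iff.mpr hz
      refine ⟨‖z‖⁻¹ • z, ⟨hcone z hzT _ (by positivity), ?_⟩, ?_⟩
      · rw [norm_smul, Real.norm_eq_abs, abs_of_nonneg (by positivity),
          inv_mul_cancel₀ hz'.ne']
      · show ⟪y, ‖z‖⁻¹ • z⟫ = ‖z‖
        rw [real_inner_smul_right, hpz]
        field_simp
  have hgreat : IsGreatest ((fun ξ => ⟪y, ξ⟫) '' {ξ | ξ ∈ T ∧ ‖ξ‖ ≤ 1}) ‖z‖ := by
    refine ⟨hmem, ?_⟩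
    rintro q ⟨ξ, ⟨hξT, hξ1⟩, rfl⟩
    exact hub ξ hξT hξ1
  constructor
  · rw [hg, hgreat.csSup_eq]
  · have e1 : ‖y - z‖ ^ 2 = ‖y‖ ^ 2 - ‖z‖ ^ 2 := by
      rw [norm_sub_sq_real, hpz]; ring
    rw [← hbest, e1]
    have : ‖y‖ ^ 2 - (‖y‖ ^ 2 - ‖z‖ ^ 2) = ‖z‖ ^ 2 := by ring
    rw [this, Real.sqrt_sq (norm_nonneg z)]
end

section
/- Let T ⊆ ℝ^N be a closed cone and f : ℝ^N → ℝ differentiable at x. If ξ ∈ T is a best approximation of −∇f(x) in T, then ∇f(x)ᵀξ = −g‖ξ‖, where g = sqrt(‖∇f(x)‖² − dist(−∇f(x),T)²). In particular ξ satisfies the 1-angle condition. -/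
open scoped RealInnerProductSpace

/-- If `T` is a closed cone (e.g. the tangent cone at `x` of a closed set),
`f` is differentiable at `x`, and `ξ ∈ T` is a best approximation of `−∇f(x)` in `T`,
then `∇f(x)ᵀξ = −g‖ξ‖` with `g = sqrt(‖∇f(x)‖² − dist(−∇f(x),T)²)`;
in particular `ξ` satisfies the 1-angle condition `∇f(x)ᵀξ ≤ −g‖ξ‖`. -/
theorem stmt_2 {N : ℕ} (T : Set (EuclideanSpace ℝ (Fin N)))
    (hclosed : IsClosed T) (hne : T.Nonempty)
    (hcone : ∀ ζ ∈ T, ∀ α : ℝ, 0 ≤ α → α • ζ ∈ T)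
    (f : EuclideanSpace ℝ (Fin N) → ℝ) (x : EuclideanSpace ℝ (Fin N))
    (hf : DifferentiableAt ℝ f x)
    (ξ : EuclideanSpace ℝ (Fin N)) (hξT : ξ ∈ T)
    (hbest : ‖-(gradient f x) - ξ‖ = Metric.infDist (-(gradient f x)) T)
    (g : ℝ)
    (hg : g = Real.sqrt (‖gradient f x‖ ^ 2 - Metric.infDist (-(gradient f x)) T ^ 2)) :
    ⟪gradient f x, ξ⟫ = -(g * ‖ξ‖) ∧ ⟪gradient f x, ξ⟫ ≤ -(g * ‖ξ‖) := by
  set v : EuclideanSpace ℝ (Fin N) := -(gradient f x) with hv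
  -- best approximation over the half-line {α • ξ : α ≥ 0}
  have hd : ∀ α : ℝ, 0 ≤ α → ‖v - ξ‖ ≤ ‖v - α • ξ‖ := by
    intro α hα
    rw [hbest]
    have := Metric.infDist_le_dist_of_mem (x := v) (hcone ξ hξT α hα)
    rwa [dist_eq_norm] at this
  have hexp : ∀ α : ℝ, ‖v - α • ξ‖ ^ 2
      = ‖v‖ ^ 2 - 2 * α * ⟪v, ξ⟫ + α ^ 2 * ‖ξ‖ ^ 2 := by
    intro α
    rw [norm_sub_sq_real, real_inner_smul_right, norm_smul]
    simp [mul_pow]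
    ring
  have key : ∀ t : ℝ, -1 ≤ t →
      0 ≤ 2 * t * (‖ξ‖ ^ 2 - ⟪v, ξ⟫) + t ^ 2 * ‖ξ‖ ^ 2 := by
    intro t ht
    have h1 : ‖v - ξ‖ ^ 2 ≤ ‖v - (1 + t) • ξ‖ ^ 2 := by
      have := hd (1 + t) (by linarith)
      exact pow_le_pow_left₀ (norm_nonneg _) this 2
    have e1 := hexp 1
    have e2 := hexp (1 + t)
    simp only [one_smul] at e1
    nlinarith [h1, e1, e2]
  set c : ℝ := ‖ξ‖ ^ 2 - ⟪v, ξ⟫ with hc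
  have hc0 : c = 0 := by
    by_contra hne0
    set B : ℝ := ‖ξ‖ ^ 2 with hB
    have hBnn : 0 ≤ B := sq_nonneg _
    set D : ℝ := B + c ^ 2 + 1 with hD
    have hDpos : 0 < D := by nlinarith
    have ht1 : -1 ≤ -c / D := by
      rw [neg_div, neg_le_neg_iff, div_le_one hDpos]
      nlinarith [sq_nonneg (c - 1)]
    have h := key (-c / D) ht1
    have h' : 0 ≤ (2 * (-c / D) * c + (-c / D) ^ 2 * B) * D ^ 2 :=
      mul_nonneg h (by positivity)
    have hDne : D ≠ 0 := ne_of_gt hDpos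
    have heq : (2 * (-c / D) * c + (-c / D) ^ 2 * B) * D ^ 2
        = -2 * c ^ 2 * D + c ^ 2 * B := by
      field_simp
    have h'' : 0 ≤ -2 * c ^ 2 * D + c ^ 2 * B := heq ▸ h'
    have : 0 < c ^ 2 := by positivity
    nlinarith
  have hinner : ⟪v, ξ⟫ = ‖ξ‖ ^ 2 := by
    have := hc
    linarith [hc0]
  -- Pythagoras
  have hpyth : ‖v - ξ‖ ^ 2 = ‖v‖ ^ 2 - ‖ξ‖ ^ 2 := by
    rw [norm_sub_sq_real, hinner]; ring
  have hnormv : ‖gradient f x‖ = ‖v‖ := by rw [hv, norm_neg]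
  have hgval : g = ‖ξ‖ := by
    rw [hg, hnormv, ← hbest, hpyth]
    have : ‖v‖ ^ 2 - (‖v‖ ^ 2 - ‖ξ‖ ^ 2) = ‖ξ‖ ^ 2 := by ring
    rw [this, Real.sqrt_sq (norm_nonneg _)]
  have hmain : ⟪gradient f x, ξ⟫ = -(g * ‖ξ‖) := by
    have : ⟪gradient f x, ξ⟫ = -⟪v, ξ⟫ := by
      rw [hv, inner_neg_left]; ring
    rw [this, hinner, hgval]
    ring
  exact ⟨hmain, le_of_eq hmain⟩
end

section
/- Let X ∈ ℝ^{m×n} have rank s ≤ k, with column space U and row space V. Every matrix of the form Ξ_s + Ξ_{k−s}, where Ξ_s ∈ (U⊗V) ⊕ (U^⊥⊗V) ⊕ (U⊗V^⊥) and Ξ_{k−s} ∈ U^⊥⊗V^⊥ has rank at most k−s, lies in the tangent cone of M_{≤k} = {Y : rank Y ≤ k} at X. -/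
/-!
Write a tangent vector of the fixed-rank manifold as `Ξ_s = F X + X E`. Along the curve
`Y t = (1 + t F) X (1 + t E) + t Ξ_{k-s}` the first summand keeps rank at most `rank X = s` and the
second has rank at most `k - s`, so `Y t` stays in `M_{≤k}`, while
`(Y t - X) / t = Ξ_s + Ξ_{k-s} + t F X E`.
-/

open Matrix
/-- Column space of a matrix. -/
def colSpace {m n : ℕ} (X : Matrix (Fin m) (Fin n) ℝ) : Set (Fin m → ℝ) :=
  {y | ∃ v, X.mulVec v = y}

/-- Row space of a matrix. -/
def rowSpace {m n : ℕ} (X : Matrix (Fin m) (Fin n) ℝ) : Set (Fin n → ℝ) :=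
  colSpace Xᵀ

/-- Orthogonal complement (w.r.t. the Euclidean dot product) of a set of vectors. -/
def perp {p : ℕ} (S : Set (Fin p → ℝ)) : Set (Fin p → ℝ) :=
  {x | ∀ u ∈ S, ∑ i, x i * u i = 0}

/-- `A ⊗ B`: matrices whose column space lies in `A` and row space lies in `B`. -/
def tensorSp {m n : ℕ} (A : Set (Fin m → ℝ)) (B : Set (Fin n → ℝ)) :
    Set (Matrix (Fin m) (Fin n) ℝ) :=
  {Z | (∀ v, Z.mulVec v ∈ A) ∧ (∀ u, Zᵀ.mulVec u ∈ B)}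

/-- Frobenius inner product. -/
noncomputable def frobInner {m n : ℕ} (A B : Matrix (Fin m) (Fin n) ℝ) : ℝ :=
  ∑ i, ∑ j, A i j * B i j

/-- Frobenius norm. -/
noncomputable def frobNorm {m n : ℕ} (A : Matrix (Fin m) (Fin n) ℝ) : ℝ :=
  Real.sqrt (frobInner A A)

/-- The tangent space `T_X M_s = (U⊗V) ⊕ (U^⊥⊗V) ⊕ (U⊗V^⊥)`, `U, V` column/row space of `X`. -/
def tangentMs {m n : ℕ} (X : Matrix (Fin m) (Fin n) ℝ) : Set (Matrix (Fin m) (Fin n) ℝ) :=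
  {Ξ | ∃ Z₁ ∈ tensorSp (colSpace X) (rowSpace X),
       ∃ Z₂ ∈ tensorSp (perp (colSpace X)) (rowSpace X),
       ∃ Z₃ ∈ tensorSp (colSpace X) (perp (rowSpace X)), Ξ = Z₁ + Z₂ + Z₃}

/-- Sequential tangent cone of a set of matrices, w.r.t. Frobenius distance. -/
def matTangentCone {m n : ℕ} (M : Set (Matrix (Fin m) (Fin n) ℝ))
    (X : Matrix (Fin m) (Fin n) ℝ) : Set (Matrix (Fin m) (Fin n) ℝ) :=
  {Ξ | ∃ (Y : ℕ → Matrix (Fin m) (Fin n) ℝ) (a : ℕ → ℝ),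
      (∀ i, Y i ∈ M) ∧ (∀ i, 0 < a i) ∧
      Filter.Tendsto (fun i => frobNorm (Y i - X)) Filter.atTop (nhds 0) ∧
      Filter.Tendsto (fun i => frobNorm (a i • (Y i - X) - Ξ)) Filter.atTop (nhds 0)}

/-- `P` is the orthogonal projector (symmetric idempotent matrix) onto `U`. -/
def IsOrthProjOnto {p : ℕ} (P : Matrix (Fin p) (Fin p) ℝ) (U : Set (Fin p → ℝ)) : Prop :=
  Pᵀ = P ∧ P * P = P ∧ colSpace P = U

open Filter Topology

lemma Matrix.rank_add_le {m n K : Type*} [Fintype n] [Field K] (A B : Matrix m n K) :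
    (A + B).rank ≤ A.rank + B.rank := by
  rw [Matrix.rank, Matrix.rank, Matrix.rank, Matrix.mulVecLin_add]
  exact (Submodule.finrank_mono (LinearMap.range_add_le _ _)).trans
    (Submodule.finrank_add_le_finrank_add_finrank _ _)

lemma Matrix.rank_smul_le {m n R : Type*} [Fintype m] [Fintype n] [DecidableEq m] [CommRing R]
    [StrongRankCondition R] (c : R) (A : Matrix m n R) : (c • A).rank ≤ A.rank := by
  simpa using rank_mul_le_right (c • (1 : Matrix m m R)) A

lemma exists_eq_mul_of_mulVec_mem_colSpace {m n p : ℕ} {X : Matrix (Fin m) (Fin n) ℝ}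
    {Z : Matrix (Fin m) (Fin p) ℝ} (h : ∀ v, Z *ᵥ v ∈ colSpace X) :
    ∃ E : Matrix (Fin n) (Fin p) ℝ, Z = X * E := by
  choose w hw using fun j => h (Pi.single j 1)
  refine ⟨Matrix.of fun l j => w j l, ?_⟩
  ext i j
  simpa [Matrix.mul_apply, mulVec, dotProduct, Pi.single_apply] using (congrFun (hw j) i).symm

lemma exists_eq_mul_add_mul_of_mem_tangentMs {m n : ℕ} {X Ξ : Matrix (Fin m) (Fin n) ℝ}
    (h : Ξ ∈ tangentMs X) :
    ∃ (F : Matrix (Fin m) (Fin m) ℝ) (E : Matrix (Fin n) (Fin n) ℝ), Ξ = F * X + X * E := by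
  obtain ⟨Z₁, hZ₁, Z₂, hZ₂, Z₃, hZ₃, rfl⟩ := h
  obtain ⟨E₁, rfl⟩ := exists_eq_mul_of_mulVec_mem_colSpace hZ₁.1
  obtain ⟨E₃, rfl⟩ := exists_eq_mul_of_mulVec_mem_colSpace hZ₃.1
  obtain ⟨G, hG⟩ := exists_eq_mul_of_mulVec_mem_colSpace hZ₂.2
  refine ⟨Gᵀ, E₁ + E₃, ?_⟩
  rw [← transpose_transpose Z₂, hG, transpose_mul, transpose_transpose, Matrix.mul_add]
  abel

lemma tendsto_frobNorm_sub {α : Type*} {l : Filter α} {m n : ℕ}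
    {f : α → Matrix (Fin m) (Fin n) ℝ} {A : Matrix (Fin m) (Fin n) ℝ} (h : Tendsto f l (𝓝 A)) :
    Tendsto (fun i => frobNorm (f i - A)) l (𝓝 0) := by
  have hcont : Continuous fun B : Matrix (Fin m) (Fin n) ℝ => frobNorm (B - A) := by
    unfold frobNorm frobInner
    fun_prop
  have h0 : frobNorm (A - A) = 0 := by simp [frobNorm, frobInner]
  have := (hcont.tendsto A).comp h
  rwa [h0] at this

lemma mem_matTangentCone_of_tendsto {m n : ℕ} {M : Set (Matrix (Fin m) (Fin n) ℝ)}
    {X Ξ : Matrix (Fin m) (Fin n) ℝ} (Y : ℝ → Matrix (Fin m) (Fin n) ℝ)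
    (hY : ∀ t > 0, Y t ∈ M) (hlim : Tendsto (fun t => t⁻¹ • (Y t - X)) (𝓝[>] 0) (𝓝 Ξ)) :
    Ξ ∈ matTangentCone M X := by
  set t : ℕ → ℝ := fun i => 1 / ((i : ℝ) + 1)
  have ht_pos : ∀ i, 0 < t i := fun i => by positivity
  have ht : Tendsto t atTop (𝓝[>] 0) :=
    tendsto_nhdsWithin_iff.2 ⟨tendsto_one_div_add_atTop_nhds_zero_nat, .of_forall ht_pos⟩
  have hquot := hlim.comp ht
  have hY_sub : Tendsto (fun i => Y (t i) - X) atTop (𝓝 0) := by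
    have := (tendsto_nhdsWithin_iff.1 ht).1.smul hquot
    rw [zero_smul] at this
    refine this.congr fun i => ?_
    simp only [Function.comp_apply, smul_smul, mul_inv_cancel₀ (ht_pos i).ne', one_smul]
  refine ⟨fun i => Y (t i), fun i => (t i)⁻¹, fun i => hY _ (ht_pos i),
    fun i => inv_pos.2 (ht_pos i), ?_, tendsto_frobNorm_sub hquot⟩
  simpa only [sub_zero] using tendsto_frobNorm_sub hY_sub

lemma inv_smul_perturbation_sub {m n : ℕ} (X Ξ : Matrix (Fin m) (Fin n) ℝ)
    (F : Matrix (Fin m) (Fin m) ℝ) (E : Matrix (Fin n) (Fin n) ℝ) {t : ℝ} (ht : t ≠ 0) :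
    t⁻¹ • ((1 + t • F) * X * (1 + t • E) + t • Ξ - X) = F * X + X * E + Ξ + t • (F * X * E) := by
  simp only [Matrix.mul_add, Matrix.add_mul, Matrix.mul_smul, Matrix.smul_mul,
    Matrix.mul_one, Matrix.one_mul, smul_add, smul_smul]
  match_scalars <;> simp [field]

lemma mul_add_mul_add_mem_matTangentCone {m n k : ℕ} {X Ξ : Matrix (Fin m) (Fin n) ℝ}
    (F : Matrix (Fin m) (Fin m) ℝ) (E : Matrix (Fin n) (Fin n) ℝ) (hk : X.rank + Ξ.rank ≤ k) :
    F * X + X * E + Ξ ∈ matTangentCone {Y : Matrix (Fin m) (Fin n) ℝ | Y.rank ≤ k} X := by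
  refine mem_matTangentCone_of_tendsto (fun t => (1 + t • F) * X * (1 + t • E) + t • Ξ)
    (fun t _ => ?_) ?_
  · calc _ ≤ ((1 + t • F) * X * (1 + t • E)).rank + (t • Ξ).rank := Matrix.rank_add_le _ _
      _ ≤ X.rank + Ξ.rank :=
        add_le_add ((rank_mul_le_left _ _).trans (rank_mul_le_right _ _)) (rank_smul_le _ _)
      _ ≤ k := hk
  · have hcont : Continuous fun t : ℝ => F * X + X * E + Ξ + t • (F * X * E) := by fun_prop
    have := (hcont.tendsto 0).mono_left (nhdsWithin_le_nhds (s := Set.Ioi 0))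
    rw [zero_smul, add_zero] at this
    exact this.congr' (eventually_nhdsWithin_of_forall fun t ht =>
      (inv_smul_perturbation_sub X Ξ F E (ne_of_gt ht)).symm)

theorem stmt_4_general {m n s k : ℕ} (X : Matrix (Fin m) (Fin n) ℝ)
    (hrank : X.rank = s) (hsk : s ≤ k)
    (Ξs : Matrix (Fin m) (Fin n) ℝ) (hΞs : Ξs ∈ tangentMs X)
    (Ξk : Matrix (Fin m) (Fin n) ℝ)
    (hΞkrk : Ξk.rank ≤ k - s) :
    Ξs + Ξk ∈ matTangentCone {Y : Matrix (Fin m) (Fin n) ℝ | Y.rank ≤ k} X := by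
  obtain ⟨F, E, rfl⟩ := exists_eq_mul_add_mul_of_mem_tangentMs hΞs
  exact mul_add_mul_add_mem_matTangentCone F E (by omega)

/-- For `X` of rank `s ≤ k`, every matrix `Ξ_s + Ξ_{k−s}` with
`Ξ_s ∈ T_X M_s = (U⊗V) ⊕ (U^⊥⊗V) ⊕ (U⊗V^⊥)` and `Ξ_{k−s} ∈ U^⊥⊗V^⊥` of rank at most
`k−s` lies in the tangent cone of `M_{≤k}` at `X`. -/
theorem stmt_4 {m n s k : ℕ} (X : Matrix (Fin m) (Fin n) ℝ)
    (hrank : X.rank = s) (hsk : s ≤ k)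
    (Ξs : Matrix (Fin m) (Fin n) ℝ) (hΞs : Ξs ∈ tangentMs X)
    (Ξk : Matrix (Fin m) (Fin n) ℝ)
    (hΞk : Ξk ∈ tensorSp (perp (colSpace X)) (perp (rowSpace X)))
    (hΞkrk : Ξk.rank ≤ k - s) :
    Ξs + Ξk ∈ matTangentCone {Y : Matrix (Fin m) (Fin n) ℝ | Y.rank ≤ k} X :=
  stmt_4_general X hrank hsk Ξs hΞs Ξk hΞkrk
end

section
/- Let X ∈ ℝ^{m×n} have rank s ≤ k, with column space U and row space V, and let Ξ ∈ T_X M_{≤k} be any tangent vector, decomposed as Ξ = Ξ_s + Ξ_{k−s} per the tangent cone structure. If R(X,Ξ) is a best approximation of X + Ξ in Frobenius norm by a matrix of rank at most k, then ‖R(X,Ξ) − (X+Ξ)‖_F ≤ (1/√2)·‖Ξ‖_F. -/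
open Matrix
/-!
Let `P`, `Q` be the orthogonal projectors onto the column and row spaces of `X`. If `Yᵢ = X + Eᵢ`
has rank at most `k`, `Eᵢ → 0` and `aᵢ Eᵢ → Ξ`, then `(P + aᵢ (1 - P)) Yᵢ` still has rank at most
`k` and tends to `X + (1 - P) Ξ`; a further left factor `1 + N` adds the block `P Ξ Q`. Hence
`X + Ξ - P Ξ (1 - Q)` is a limit of rank-`≤ k` matrices, so it competes with `R`:
`‖R - (X + Ξ)‖ ≤ ‖P Ξ (1 - Q)‖`. By transposition also `‖R - (X + Ξ)‖ ≤ ‖(1 - P) Ξ Q‖`, and these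
two blocks of `Ξ` are orthogonal, so `2 ‖R - (X + Ξ)‖² ≤ ‖Ξ‖²`.
-/

open Filter Topology WithLp

section Frobenius

variable {m n : ℕ}

lemma frobInner_self_nonneg (A : Matrix (Fin m) (Fin n) ℝ) : 0 ≤ frobInner A A :=
  Finset.sum_nonneg fun _ _ => Finset.sum_nonneg fun _ _ => mul_self_nonneg _

lemma frobNorm_nonneg (A : Matrix (Fin m) (Fin n) ℝ) : 0 ≤ frobNorm A :=
  Real.sqrt_nonneg _

lemma frobNorm_sq (A : Matrix (Fin m) (Fin n) ℝ) : frobNorm A ^ 2 = frobInner A A :=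
  Real.sq_sqrt (frobInner_self_nonneg A)

lemma frobInner_eq_trace (A B : Matrix (Fin m) (Fin n) ℝ) : frobInner A B = (Aᵀ * B).trace := by
  simp only [frobInner, trace, diag, mul_apply, transpose_apply]
  exact Finset.sum_comm

lemma frobNorm_neg (A : Matrix (Fin m) (Fin n) ℝ) : frobNorm (-A) = frobNorm A := by
  simp [frobNorm, frobInner]

lemma frobNorm_transpose (A : Matrix (Fin m) (Fin n) ℝ) : frobNorm Aᵀ = frobNorm A := by
  simp only [frobNorm, frobInner, transpose_apply]
  rw [Finset.sum_comm]

lemma continuous_frobNorm : Continuous (frobNorm : Matrix (Fin m) (Fin n) ℝ → ℝ) := by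
  unfold frobNorm frobInner
  fun_prop

lemma abs_apply_le_frobNorm (A : Matrix (Fin m) (Fin n) ℝ) (i : Fin m) (j : Fin n) :
    |A i j| ≤ frobNorm A := by
  rw [← Real.sqrt_mul_self_eq_abs]
  refine Real.sqrt_le_sqrt ?_
  calc A i j * A i j ≤ ∑ j', A i j' * A i j' :=
        Finset.single_le_sum (fun _ _ => mul_self_nonneg _) (Finset.mem_univ j)
    _ ≤ frobInner A A :=
        Finset.single_le_sum (f := fun i => ∑ j, A i j * A i j)
          (fun _ _ => Finset.sum_nonneg fun _ _ => mul_self_nonneg _) (Finset.mem_univ i)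

lemma tendsto_zero_of_frobNorm {ι : Type*} {l : Filter ι} {F : ι → Matrix (Fin m) (Fin n) ℝ}
    (h : Tendsto (fun t => frobNorm (F t)) l (𝓝 0)) : Tendsto F l (𝓝 0) :=
  tendsto_pi_nhds.2 fun i => tendsto_pi_nhds.2 fun j =>
    squeeze_zero_norm (fun _ => (Real.norm_eq_abs _).trans_le (abs_apply_le_frobNorm _ i j)) h

lemma frobNorm_sq_add_of_frobInner_eq_zero {A B : Matrix (Fin m) (Fin n) ℝ}
    (h : frobInner A B = 0) : frobNorm (A + B) ^ 2 = frobNorm A ^ 2 + frobNorm B ^ 2 := by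
  have hBA : frobInner B A = 0 := by
    rw [← h]
    simp only [frobInner, mul_comm]
  simp only [frobNorm_sq, frobInner_eq_trace, transpose_add, Matrix.add_mul, Matrix.mul_add,
    trace_add] at h hBA ⊢
  linarith

lemma frobNorm_sq_eq_mul_add_one_sub_mul {P : Matrix (Fin m) (Fin m) ℝ} (hP : Pᵀ = P)
    (hPP : P * P = P) (A : Matrix (Fin m) (Fin n) ℝ) :
    frobNorm A ^ 2 = frobNorm (P * A) ^ 2 + frobNorm ((1 - P) * A) ^ 2 := by
  rw [← frobNorm_sq_add_of_frobInner_eq_zero, ← Matrix.add_mul, add_sub_cancel, Matrix.one_mul]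
  rw [frobInner_eq_trace, transpose_mul, hP, Matrix.mul_assoc, ← Matrix.mul_assoc P,
    Matrix.mul_sub, Matrix.mul_one, hPP, sub_self, Matrix.zero_mul, Matrix.mul_zero, trace_zero]

lemma frobNorm_sq_eq_mul_add_mul_one_sub {Q : Matrix (Fin n) (Fin n) ℝ} (hQ : Qᵀ = Q)
    (hQQ : Q * Q = Q) (A : Matrix (Fin m) (Fin n) ℝ) :
    frobNorm A ^ 2 = frobNorm (A * Q) ^ 2 + frobNorm (A * (1 - Q)) ^ 2 := by
  have h := frobNorm_sq_eq_mul_add_one_sub_mul hQ hQQ Aᵀ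
  have e₁ : Q * Aᵀ = (A * Q)ᵀ := by rw [transpose_mul, hQ]
  have e₂ : (1 - Q) * Aᵀ = (A * (1 - Q))ᵀ := by
    rw [transpose_mul, transpose_sub, transpose_one, hQ]
  rwa [e₁, e₂, frobNorm_transpose, frobNorm_transpose, frobNorm_transpose] at h

lemma frobNorm_sq_add_offDiag_le {P : Matrix (Fin m) (Fin m) ℝ} {Q : Matrix (Fin n) (Fin n) ℝ}
    (hP : Pᵀ = P) (hPP : P * P = P) (hQ : Qᵀ = Q) (hQQ : Q * Q = Q)
    (Ξ : Matrix (Fin m) (Fin n) ℝ) :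
    frobNorm ((1 - P) * Ξ * Q) ^ 2 + frobNorm (P * Ξ * (1 - Q)) ^ 2 ≤ frobNorm Ξ ^ 2 := by
  rw [frobNorm_sq_eq_mul_add_one_sub_mul hP hPP Ξ,
    frobNorm_sq_eq_mul_add_mul_one_sub hQ hQQ (P * Ξ),
    frobNorm_sq_eq_mul_add_mul_one_sub hQ hQQ ((1 - P) * Ξ)]
  nlinarith [sq_nonneg (frobNorm (P * Ξ * Q)), sq_nonneg (frobNorm ((1 - P) * Ξ * (1 - Q)))]

end Frobenius

section Projection

variable {p q : ℕ}

lemma mem_colSpace_iff (M : Matrix (Fin p) (Fin q) ℝ) (y : Fin p → ℝ) :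
    y ∈ colSpace M ↔ toLp 2 y ∈ LinearMap.range M.toEuclideanLin := by
  constructor
  · rintro ⟨v, rfl⟩
    exact ⟨toLp 2 v, rfl⟩
  · rintro ⟨w, hw⟩
    exact ⟨ofLp w, congrArg ofLp hw⟩

lemma exists_isOrthProjOnto_colSpace (A : Matrix (Fin p) (Fin q) ℝ) :
    ∃ P, IsOrthProjOnto P (colSpace A) := by
  set K := LinearMap.range A.toEuclideanLin
  set P := Matrix.toEuclideanLin.symm (K.starProjection :
    EuclideanSpace ℝ (Fin p) →ₗ[ℝ] EuclideanSpace ℝ (Fin p))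
  have hP : P.toEuclideanLin = K.starProjection := by simp [P]
  refine ⟨P, ?_, ?_, ?_⟩
  · have := Matrix.isSymmetric_toEuclideanLin_iff.1 (hP ▸ K.starProjection_isSymmetric)
    simpa using this.eq
  · apply (Matrix.toLpLinAlgEquiv (p := 2)).injective
    rw [map_mul]
    change P.toEuclideanLin * P.toEuclideanLin = P.toEuclideanLin
    rw [hP]
    exact ContinuousLinearMap.IsIdempotentElem.toLinearMap K.isIdempotentElem_starProjection
  · ext y
    rw [mem_colSpace_iff, mem_colSpace_iff, hP]
    simp [K]

namespace IsOrthProjOnto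

variable {P : Matrix (Fin p) (Fin p) ℝ} {A : Matrix (Fin p) (Fin q) ℝ}

lemma mul_eq_self (hP : IsOrthProjOnto P (colSpace A)) : P * A = A := by
  refine mulVec_injective (funext fun v => ?_)
  obtain ⟨w, hw⟩ : A *ᵥ v ∈ colSpace P := hP.2.2 ▸ ⟨v, rfl⟩
  rw [← mulVec_mulVec, ← hw, mulVec_mulVec, hP.2.1]

lemma exists_eq_mul (hP : IsOrthProjOnto P (colSpace A)) :
    ∃ L : Matrix (Fin q) (Fin p) ℝ, P = A * L := by
  have hcol (j : Fin p) : P *ᵥ Pi.single j 1 ∈ colSpace A := hP.2.2 ▸ ⟨_, rfl⟩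
  choose v hv using hcol
  refine ⟨Matrix.of fun i j => v j i, Matrix.ext fun i j => ?_⟩
  rw [Matrix.mul_apply]
  simpa [mulVec, dotProduct, Pi.single_apply] using (congrFun (hv j) i).symm

end IsOrthProjOnto

end Projection

section TangentCone

variable {m n k : ℕ}

lemma mul_mem_closure_setOf_rank_le {l : ℕ} {Z : Matrix (Fin m) (Fin n) ℝ}
    (hZ : Z ∈ closure {Y : Matrix (Fin m) (Fin n) ℝ | Y.rank ≤ k}) (M : Matrix (Fin l) (Fin m) ℝ) :
    M * Z ∈ closure {Y : Matrix (Fin l) (Fin n) ℝ | Y.rank ≤ k} :=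
  map_mem_closure (continuous_const.matrix_mul continuous_id) hZ
    fun Y hY => (rank_mul_le_right M Y).trans hY

lemma add_one_sub_mul_mem_closure_setOf_rank_le {X Ξ : Matrix (Fin m) (Fin n) ℝ}
    (hΞ : Ξ ∈ matTangentCone {Y | Y.rank ≤ k} X) {P : Matrix (Fin m) (Fin m) ℝ}
    (hPX : P * X = X) :
    X + (1 - P) * Ξ ∈ closure {Y : Matrix (Fin m) (Fin n) ℝ | Y.rank ≤ k} := by
  obtain ⟨Y, a, hY, -, hYX, haY⟩ := hΞ
  have hE : Tendsto (fun i => Y i - X) atTop (𝓝 0) := tendsto_zero_of_frobNorm hYX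
  have haE : Tendsto (fun i => a i • (Y i - X)) atTop (𝓝 Ξ) :=
    tendsto_sub_nhds_zero_iff.1 (tendsto_zero_of_frobNorm haY)
  have hlim : Tendsto (fun i => X + P * (Y i - X) + (1 - P) * (a i • (Y i - X))) atTop
      (𝓝 (X + (1 - P) * Ξ)) := by
    have hcont : Continuous fun EF : Matrix (Fin m) (Fin n) ℝ × Matrix (Fin m) (Fin n) ℝ =>
        X + P * EF.1 + (1 - P) * EF.2 := by fun_prop
    simpa only [Function.comp_def, Matrix.mul_zero, add_zero] using
      (hcont.tendsto (0, Ξ)).comp (hE.prodMk_nhds haE)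
  refine mem_closure_of_tendsto hlim (Eventually.of_forall fun i => ?_)
  have heq : (P + a i • (1 - P)) * Y i = X + P * (Y i - X) + (1 - P) * (a i • (Y i - X)) := by
    have h1PX : (1 - P) * X = 0 := by rw [Matrix.sub_mul, Matrix.one_mul, hPX, sub_self]
    rw [Matrix.mul_smul, Matrix.mul_sub, Matrix.mul_sub, hPX, h1PX, sub_zero, Matrix.add_mul,
      Matrix.smul_mul]
    abel
  rw [← heq]
  exact (rank_mul_le_right _ _).trans (hY i)

lemma transpose_mem_matTangentCone_setOf_rank_le {X Ξ : Matrix (Fin m) (Fin n) ℝ}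
    (hΞ : Ξ ∈ matTangentCone {Y | Y.rank ≤ k} X) :
    Ξᵀ ∈ matTangentCone {Y | Y.rank ≤ k} Xᵀ := by
  obtain ⟨Y, a, hY, ha, hYX, haY⟩ := hΞ
  refine ⟨fun i => (Y i)ᵀ, a, fun i => ?_, ha, ?_, ?_⟩
  · simpa [rank_transpose] using hY i
  · simpa [← transpose_sub, frobNorm_transpose] using hYX
  · simpa [← transpose_sub, ← transpose_smul, frobNorm_transpose] using haY

end TangentCone

section BestApproximation

variable {m n k : ℕ}

lemma le_frobNorm_sub_of_mem_closure {S : Set (Matrix (Fin m) (Fin n) ℝ)}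
    {A Z : Matrix (Fin m) (Fin n) ℝ} {r : ℝ} (h : ∀ Y ∈ S, r ≤ frobNorm (Y - A))
    (hZ : Z ∈ closure S) : r ≤ frobNorm (Z - A) :=
  closure_minimal h (isClosed_le continuous_const
    (continuous_frobNorm.comp (continuous_id.sub continuous_const))) hZ

lemma frobNorm_sub_le_frobNorm_mul_mul_one_sub {X Ξ R : Matrix (Fin m) (Fin n) ℝ}
    (hΞ : Ξ ∈ matTangentCone {Y | Y.rank ≤ k} X)
    (hbest : ∀ Y : Matrix (Fin m) (Fin n) ℝ, Y.rank ≤ k →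
      frobNorm (R - (X + Ξ)) ≤ frobNorm (Y - (X + Ξ)))
    {P : Matrix (Fin m) (Fin m) ℝ} {Q : Matrix (Fin n) (Fin n) ℝ}
    (hP : IsOrthProjOnto P (colSpace X)) (hQ : IsOrthProjOnto Q (rowSpace X)) :
    frobNorm (R - (X + Ξ)) ≤ frobNorm (P * Ξ * (1 - Q)) := by
  obtain ⟨W, hW⟩ := hQ.exists_eq_mul
  have hQX : Wᵀ * X = Q := by rw [← hQ.1, hW, transpose_mul, transpose_transpose]
  have hPX : P * X = X := hP.mul_eq_self
  have hPP (M : Matrix (Fin m) (Fin n) ℝ) : P * (P * M) = P * M := by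
    rw [← Matrix.mul_assoc, hP.2.1]
  -- `N = P Ξ Wᵀ P` satisfies `N X = P Ξ Q` and `N (1 - P) = 0`.
  have hmem := mul_mem_closure_setOf_rank_le
    (add_one_sub_mul_mem_closure_setOf_rank_le hΞ hPX) (1 + P * Ξ * Wᵀ * P)
  have heq : (1 + P * Ξ * Wᵀ * P) * (X + (1 - P) * Ξ) - (X + Ξ) = -(P * Ξ * (1 - Q)) := by
    simp only [Matrix.add_mul, Matrix.mul_add, Matrix.sub_mul, Matrix.mul_sub, Matrix.one_mul,
      Matrix.mul_one, Matrix.mul_assoc, hPX, hPP, hQX]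
    abel
  rw [← frobNorm_neg (P * Ξ * (1 - Q)), ← heq]
  exact le_frobNorm_sub_of_mem_closure hbest hmem

lemma frobNorm_sub_le_frobNorm_one_sub_mul_mul {X Ξ R : Matrix (Fin m) (Fin n) ℝ}
    (hΞ : Ξ ∈ matTangentCone {Y | Y.rank ≤ k} X)
    (hbest : ∀ Y : Matrix (Fin m) (Fin n) ℝ, Y.rank ≤ k →
      frobNorm (R - (X + Ξ)) ≤ frobNorm (Y - (X + Ξ)))
    {P : Matrix (Fin m) (Fin m) ℝ} {Q : Matrix (Fin n) (Fin n) ℝ}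
    (hP : IsOrthProjOnto P (colSpace X)) (hQ : IsOrthProjOnto Q (rowSpace X)) :
    frobNorm (R - (X + Ξ)) ≤ frobNorm ((1 - P) * Ξ * Q) := by
  have hbest' (Y : Matrix (Fin n) (Fin m) ℝ) (hY : Y.rank ≤ k) :
      frobNorm (Rᵀ - (Xᵀ + Ξᵀ)) ≤ frobNorm (Y - (Xᵀ + Ξᵀ)) := by
    have h := hbest Yᵀ (by rwa [rank_transpose])
    rwa [← frobNorm_transpose (R - _), ← frobNorm_transpose (Yᵀ - _), transpose_sub,
      transpose_sub, transpose_add, transpose_transpose] at h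
  have hP' : IsOrthProjOnto P (rowSpace Xᵀ) := by rwa [rowSpace, transpose_transpose]
  have h := frobNorm_sub_le_frobNorm_mul_mul_one_sub
    (transpose_mem_matTangentCone_setOf_rank_le hΞ) hbest' hQ hP'
  have e : Q * Ξᵀ * (1 - P) = ((1 - P) * Ξ * Q)ᵀ := by
    simp only [transpose_mul, transpose_sub, transpose_one, hP.1, hQ.1, Matrix.mul_assoc]
  rwa [e, frobNorm_transpose, ← transpose_add, ← transpose_sub, frobNorm_transpose] at h

end BestApproximation

theorem stmt_9_general {m n k : ℕ} (X : Matrix (Fin m) (Fin n) ℝ)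
    (Ξ : Matrix (Fin m) (Fin n) ℝ)
    (hΞ : Ξ ∈ matTangentCone {Y : Matrix (Fin m) (Fin n) ℝ | Y.rank ≤ k} X)
    (R : Matrix (Fin m) (Fin n) ℝ)
    (hbest : ∀ Y : Matrix (Fin m) (Fin n) ℝ, Y.rank ≤ k →
      frobNorm (R - (X + Ξ)) ≤ frobNorm (Y - (X + Ξ))) :
    frobNorm (R - (X + Ξ)) ≤ (1 / Real.sqrt 2) * frobNorm Ξ := by
  obtain ⟨P, hP⟩ := exists_isOrthProjOnto_colSpace X
  obtain ⟨Q, hQ⟩ := exists_isOrthProjOnto_colSpace Xᵀ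
  have h₁ := frobNorm_sub_le_frobNorm_one_sub_mul_mul hΞ hbest hP hQ
  have h₂ := frobNorm_sub_le_frobNorm_mul_mul_one_sub hΞ hbest hP hQ
  have hΞ₁₂ := frobNorm_sq_add_offDiag_le hP.1 hP.2.1 hQ.1 hQ.2.1 Ξ
  have hr := frobNorm_nonneg (R - (X + Ξ))
  have hsq : (frobNorm (R - (X + Ξ)) * Real.sqrt 2) ^ 2 ≤ frobNorm Ξ ^ 2 := by
    rw [mul_pow, Real.sq_sqrt zero_le_two]
    nlinarith [pow_le_pow_left₀ hr h₁ 2, pow_le_pow_left₀ hr h₂ 2]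
  rw [one_div, ← div_eq_inv_mul, le_div_iff₀ (by positivity)]
  exact (pow_le_pow_iff_left₀ (by positivity) (frobNorm_nonneg Ξ) two_ne_zero).1 hsq

/-- For `X` of rank `s ≤ k`, any tangent vector `Ξ ∈ T_X M_{≤k}` and any best
Frobenius-norm approximation `R` of `X + Ξ` by a matrix of rank at most `k`,
`‖R − (X+Ξ)‖_F ≤ (1/√2) ‖Ξ‖_F`. -/
theorem stmt_9 {m n s k : ℕ} (X : Matrix (Fin m) (Fin n) ℝ)
    (hrank : X.rank = s) (hsk : s ≤ k)
    (Ξ : Matrix (Fin m) (Fin n) ℝ)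
    (hΞ : Ξ ∈ matTangentCone {Y : Matrix (Fin m) (Fin n) ℝ | Y.rank ≤ k} X)
    (R : Matrix (Fin m) (Fin n) ℝ) (hRrk : R.rank ≤ k)
    (hbest : ∀ Y : Matrix (Fin m) (Fin n) ℝ, Y.rank ≤ k →
      frobNorm (R - (X + Ξ)) ≤ frobNorm (Y - (X + Ξ))) :
    frobNorm (R - (X + Ξ)) ≤ (1 / Real.sqrt 2) * frobNorm Ξ :=
  stmt_9_general X Ξ hΞ R hbest
end

section
/- For 0 < s ≤ min(m,n), the map (U,V) ↦ UVᵀ from the open set {(U,V) ∈ ℝ^{m×s} × ℝ^{n×s} : rank U = rank V = s} onto the manifold M_s of rank-s m×n matrices is a submersion: at each such (U,V), its derivative (δU, δV) ↦ δU Vᵀ + U δVᵀ has rank at least (m+n−s)s. -/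
open Matrix

private lemma sq_unit {s : ℕ} (A : Matrix (Fin s) (Fin s) ℝ) (h : A.rank = s) : IsUnit A := by
  rw [← Matrix.mulVec_surjective_iff_isUnit]
  have htop : LinearMap.range A.mulVecLin = ⊤ := by
    apply Submodule.eq_top_of_finrank_eq
    rw [Matrix.rank] at h
    simp [h]
  intro y
  exact (htop ▸ LinearMap.mem_range (f := A.mulVecLin) (x := y)).symm.mpr trivial

private def lmulL {a b c : ℕ} (M : Matrix (Fin a) (Fin b) ℝ) :
    Matrix (Fin b) (Fin c) ℝ →ₗ[ℝ] Matrix (Fin a) (Fin c) ℝ where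
  toFun X := M * X
  map_add' X Y := Matrix.mul_add M X Y
  map_smul' r X := by simp [Matrix.mul_smul]

/-- Derivative of `(U,V) ↦ U Vᵀ` at `(U,V)`: `(δU, δV) ↦ δU Vᵀ + U δVᵀ`. -/
def dUVt {m n s : ℕ} (U : Matrix (Fin m) (Fin s) ℝ) (V : Matrix (Fin n) (Fin s) ℝ) :
    (Matrix (Fin m) (Fin s) ℝ × Matrix (Fin n) (Fin s) ℝ) →ₗ[ℝ]
      Matrix (Fin m) (Fin n) ℝ where
  toFun p := p.1 * Vᵀ + U * p.2ᵀ
  map_add' p q := by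
    simp [Matrix.add_mul, Matrix.mul_add, Matrix.transpose_add]
    abel
  map_smul' c p := by
    simp [Matrix.smul_mul, Matrix.mul_smul, Matrix.transpose_smul, smul_add]

/-- For `0 < s ≤ min(m,n)`, the map `(U,V) ↦ U Vᵀ` on the set of pairs of
full-rank factors is a submersion onto `M_s`: its derivative
`(δU, δV) ↦ δU Vᵀ + U δVᵀ` has rank at least `(m+n−s)s`. -/
theorem stmt_12 {m n s : ℕ} (hs : 0 < s) (hsm : s ≤ m) (hsn : s ≤ n)
    (U : Matrix (Fin m) (Fin s) ℝ) (V : Matrix (Fin n) (Fin s) ℝ)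
    (hU : U.rank = s) (hV : V.rank = s) :
    (m + n - s) * s ≤ Module.finrank ℝ (LinearMap.range (dUVt U V)) := by
  classical
  have hUU : IsUnit (Uᵀ * U) := sq_unit _ (by rw [Matrix.rank_transpose_mul_self, hU])
  have hVV : IsUnit (Vᵀ * V) := sq_unit _ (by rw [Matrix.rank_transpose_mul_self, hV])
  obtain ⟨iU⟩ := hUU.nonempty_invertible
  obtain ⟨iV⟩ := hVV.nonempty_invertible
  set LU : Matrix (Fin m) (Fin s) ℝ →ₗ[ℝ] Matrix (Fin s) (Fin s) ℝ := lmulL Uᵀ with hLU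
  -- finrank bound for N
  have hrn := LU.finrank_range_add_finrank_ker
  have hdom : Module.finrank ℝ (Matrix (Fin m) (Fin s) ℝ) = m * s := by
    simp [Module.finrank_matrix]
  have hcod : Module.finrank ℝ (LinearMap.range LU) ≤ s * s := by
    have := Submodule.finrank_le (LinearMap.range LU)
    simpa [Module.finrank_matrix] using this
  have hNrank : m * s - s * s ≤ Module.finrank ℝ (LinearMap.ker LU) := by omega
  -- the injective map
  set G : (LinearMap.ker LU × Matrix (Fin n) (Fin s) ℝ) →ₗ[ℝ] Matrix (Fin m) (Fin n) ℝ :=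
    (dUVt U V).comp ((LinearMap.ker LU).subtype.prodMap LinearMap.id) with hG
  have hGinj : Function.Injective G := by
    rw [← LinearMap.ker_eq_bot]
    rw [LinearMap.ker_eq_bot']
    rintro ⟨x, y⟩ hxy
    have hx0 : Uᵀ * (x : Matrix (Fin m) (Fin s) ℝ) = 0 := x.2
    have heq : (x : Matrix (Fin m) (Fin s) ℝ) * Vᵀ + U * yᵀ = 0 := hxy
    have h1 : Uᵀ * ((x : Matrix (Fin m) (Fin s) ℝ) * Vᵀ + U * yᵀ) = 0 := by
      rw [heq, Matrix.mul_zero]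
    rw [Matrix.mul_add, ← Matrix.mul_assoc, hx0, Matrix.zero_mul, zero_add,
      ← Matrix.mul_assoc] at h1
    have hdetU : IsUnit (Uᵀ * U).det := (Matrix.isUnit_iff_isUnit_det _).mp hUU
    have hdetV : IsUnit (Vᵀ * V).det := (Matrix.isUnit_iff_isUnit_det _).mp hVV
    have hy : yᵀ = 0 := by
      have h3 : (Uᵀ * U)⁻¹ * (Uᵀ * U * yᵀ) = yᵀ := by
        rw [← Matrix.mul_assoc, Matrix.nonsing_inv_mul _ hdetU, Matrix.one_mul]
      rw [← h3, h1, Matrix.mul_zero]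
    have hy0 : y = 0 := by
      have := congrArg Matrix.transpose hy
      simpa using this
    have hxV : (x : Matrix (Fin m) (Fin s) ℝ) * Vᵀ = 0 := by
      rw [hy0] at heq; simpa using heq
    have hx : (x : Matrix (Fin m) (Fin s) ℝ) = 0 := by
      have h2 : (x : Matrix (Fin m) (Fin s) ℝ) * (Vᵀ * V) = 0 := by
        rw [← Matrix.mul_assoc, hxV, Matrix.zero_mul]
      have h5 : (x : Matrix (Fin m) (Fin s) ℝ) * (Vᵀ * V) * (Vᵀ * V)⁻¹ =
          (x : Matrix (Fin m) (Fin s) ℝ) := by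
        rw [Matrix.mul_assoc, Matrix.mul_nonsing_inv _ hdetV, Matrix.mul_one]
      rw [← h5, h2, Matrix.zero_mul]
    exact Prod.ext (Subtype.ext (by simpa using hx)) hy0
  have hrange : LinearMap.range G ≤ LinearMap.range (dUVt U V) := by
    rw [hG]; exact LinearMap.range_comp_le_range _ _
  have hfin : Module.finrank ℝ (LinearMap.range G) =
      Module.finrank ℝ (LinearMap.ker LU) + n * s := by
    rw [LinearMap.finrank_range_of_inj hGinj, Module.finrank_prod]
    simp [Module.finrank_matrix]
  have hle := Submodule.finrank_mono hrange
  have harith : (m + n - s) * s = m * s - s * s + n * s := by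
    rw [show m + n - s = m - s + n by omega, Nat.add_mul, Nat.sub_mul]
  omega
end

section
/- Let f : ℝ^N → ℝ satisfy a Łojasiewicz-type recursion: suppose positive reals f_n are nonincreasing with f_n → 0, and ‖x_{n} − x_{n+1}‖ ≤ (Λ/σ) f_n^{θ−1}(f_n − f_{n+1}) for some θ ∈ (0,1], Λ, σ > 0. Then for all m ≥ n, Σ_{k=n}^{m} ‖x_{k+1} − x_k‖ ≤ (Λ/(σθ)) f_n^{θ}; in particular (x_n) is a Cauchy sequence. -/
lemma aux_key {a b θ : ℝ} (ha : 0 < a) (hb : 0 < b) (hba : b ≤ a)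
    (hθ0 : 0 < θ) (hθ1 : θ ≤ 1) :
    θ * (a ^ (θ - 1) * (a - b)) ≤ a ^ θ - b ^ θ := by
  have hs : (-1 : ℝ) ≤ b / a - 1 := by
    have : 0 ≤ b / a := by positivity
    linarith
  have h := rpow_one_add_le_one_add_mul_self hs hθ0.le hθ1
  have hba' : (1 : ℝ) + (b / a - 1) = b / a := by ring
  rw [hba'] at h
  -- h : (b/a)^θ ≤ 1 + θ*(b/a-1)
  have haθ : 0 < a ^ θ := Real.rpow_pos_of_pos ha θ
  have hdiv : (b / a) ^ θ = b ^ θ / a ^ θ := Real.div_rpow hb.le ha.le θ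
  rw [hdiv] at h
  have h2 : b ^ θ ≤ a ^ θ * (1 + θ * (b / a - 1)) := by
    calc b ^ θ = a ^ θ * (b ^ θ / a ^ θ) := by field_simp
    _ ≤ a ^ θ * (1 + θ * (b / a - 1)) := by
        exact mul_le_mul_of_nonneg_left h haθ.le
  have hpow : a ^ θ / a = a ^ (θ - 1) := by
    rw [Real.rpow_sub ha, Real.rpow_one]
  have expand : a ^ θ * (1 + θ * (b / a - 1)) = a ^ θ + θ * ((a ^ θ / a) * b - a ^ θ) := by
    field_simp
  rw [expand, hpow] at h2
  have hpow2 : a ^ (θ - 1) * a = a ^ θ := by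
    rw [← hpow]; field_simp
  nlinarith [h2, hpow2]

/-- If positive reals `f_n` are nonincreasing with `f_n → 0` and
`‖x_n − x_{n+1}‖ ≤ (Λ/σ) f_n^{θ−1}(f_n − f_{n+1})`, then
`Σ_{k=n}^{m} ‖x_{k+1} − x_k‖ ≤ (Λ/(σθ)) f_n^{θ}` for all `m ≥ n`; in particular
`(x_n)` is a Cauchy sequence. -/
theorem stmt_17 {N : ℕ} (x : ℕ → EuclideanSpace ℝ (Fin N))
    (f : ℕ → ℝ) (hfpos : ∀ i, 0 < f i) (hmono : ∀ i, f (i+1) ≤ f i)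
    (hf0 : Filter.Tendsto f Filter.atTop (nhds 0))
    (θ Λ σ : ℝ) (hθ : θ ∈ Set.Ioc (0 : ℝ) 1) (hΛ : 0 < Λ) (hσ : 0 < σ)
    (hstep : ∀ i, ‖x i - x (i+1)‖ ≤ (Λ / σ) * f i ^ (θ - 1) * (f i - f (i+1))) :
    (∀ i j : ℕ, i ≤ j →
      ∑ l ∈ Finset.Icc i j, ‖x (l+1) - x l‖ ≤ (Λ / (σ * θ)) * f i ^ θ) ∧
    CauchySeq x := by
  obtain ⟨hθ0, hθ1⟩ := hθ
  have hterm : ∀ l, ‖x (l+1) - x l‖ ≤ (Λ / (σ * θ)) * (f l ^ θ - f (l+1) ^ θ) := by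
    intro l
    have key := aux_key (hfpos l) (hfpos (l+1)) (hmono l) hθ0 hθ1
    have h1 : ‖x (l+1) - x l‖ = ‖x l - x (l+1)‖ := norm_sub_rev _ _
    rw [h1]
    have hc : (0:ℝ) ≤ Λ / (σ * θ) := by positivity
    have h3 := mul_le_mul_of_nonneg_left key hc
    calc ‖x l - x (l+1)‖ ≤ (Λ / σ) * f l ^ (θ - 1) * (f l - f (l+1)) := hstep l
      _ = (Λ / (σ * θ)) * (θ * (f l ^ (θ - 1) * (f l - f (l+1)))) := by
          field_simp
      _ ≤ (Λ / (σ * θ)) * (f l ^ θ - f (l+1) ^ θ) := h3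
  have main : ∀ i j : ℕ, i ≤ j →
      ∑ l ∈ Finset.Icc i j, ‖x (l+1) - x l‖
        ≤ (Λ / (σ * θ)) * (f i ^ θ - f (j+1) ^ θ) := by
    intro i j hij
    induction j, hij using Nat.le_induction with
    | base => simpa using hterm i
    | succ n hn ih =>
        rw [Finset.sum_Icc_succ_top (by omega)]
        have := hterm (n+1)
        calc (∑ l ∈ Finset.Icc i n, ‖x (l+1) - x l‖) + ‖x (n+1+1) - x (n+1)‖
            ≤ (Λ / (σ * θ)) * (f i ^ θ - f (n+1) ^ θ)
              + (Λ / (σ * θ)) * (f (n+1) ^ θ - f (n+1+1) ^ θ) := add_le_add ih this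
          _ = (Λ / (σ * θ)) * (f i ^ θ - f (n+1+1) ^ θ) := by ring
  have hbound : ∀ i j : ℕ, i ≤ j →
      ∑ l ∈ Finset.Icc i j, ‖x (l+1) - x l‖ ≤ (Λ / (σ * θ)) * f i ^ θ := by
    intro i j hij
    refine (main i j hij).trans ?_
    have : 0 ≤ f (j+1) ^ θ := (Real.rpow_pos_of_pos (hfpos _) θ).le
    have hc : 0 ≤ Λ / (σ * θ) := by positivity
    nlinarith
  refine ⟨hbound, ?_⟩
  apply cauchySeq_of_le_tendsto_0 (fun n => (Λ / (σ * θ)) * f n ^ θ)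
  · intro n m K hn hm
    rcases le_total n m with h | h
    · calc dist (x n) (x m) ≤ ∑ l ∈ Finset.Ico n m, dist (x l) (x (l+1)) :=
            dist_le_Ico_sum_dist x h
        _ = ∑ l ∈ Finset.Ico n m, ‖x (l+1) - x l‖ := by
            apply Finset.sum_congr rfl; intro l _
            rw [dist_eq_norm, norm_sub_rev]
        _ ≤ ∑ l ∈ Finset.Icc K m, ‖x (l+1) - x l‖ := by
            apply Finset.sum_le_sum_of_subset_of_nonneg
            · intro l hl
              simp only [Finset.mem_Ico, Finset.mem_Icc] at *
              omega
            · intros; positivity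
        _ ≤ (Λ / (σ * θ)) * f K ^ θ := hbound K m (le_trans hn h)
    · calc dist (x n) (x m) = dist (x m) (x n) := dist_comm _ _
        _ ≤ ∑ l ∈ Finset.Ico m n, dist (x l) (x (l+1)) := dist_le_Ico_sum_dist x h
        _ = ∑ l ∈ Finset.Ico m n, ‖x (l+1) - x l‖ := by
            apply Finset.sum_congr rfl; intro l _
            rw [dist_eq_norm, norm_sub_rev]
        _ ≤ ∑ l ∈ Finset.Icc K n, ‖x (l+1) - x l‖ := by
            apply Finset.sum_le_sum_of_subset_of_nonneg
            · intro l hl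
              simp only [Finset.mem_Ico, Finset.mem_Icc] at *
              omega
            · intros; positivity
        _ ≤ (Λ / (σ * θ)) * f K ^ θ := hbound K n (le_trans hm h)
  · have h1 : Filter.Tendsto (fun n => f n ^ θ) Filter.atTop (nhds ((0:ℝ) ^ θ)) :=
      hf0.rpow_const (Or.inr hθ0.le)
    rw [Real.zero_rpow hθ0.ne'] at h1
    simpa using h1.const_mul (Λ / (σ * θ))
end
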